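/- arXiv:1508.04568 — 2 statements merged into one kernel-verified Lean document; each statement's English description precedes it below -/
import Mathlib

section
/- Let (V,ω) be a symplectic vector space, L ⊆ V × V a linear canonical relation from V to itself with domain A and range B, and let A₁, B₁ be subspaces with A = A^ω ⊕ A₁ and B = B^ω ⊕ B₁. For u ∈ A write u = u₀ + u₁ with u₀ ∈ A^ω, u₁ ∈ A₁, and for u ∈ B write u = u₀ + u₁ with u₀ ∈ B^ω, u₁ ∈ B₁. Then (v,w) ∈ L implies (v₁,w₁) ∈ L. -/
open Submodule Module

/-- The ω-orthogonal of a subspace: `W^ω = {v | ω(v,u) = 0 for all u ∈ W}`. -/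
def oOrtho {V : Type*} [AddCommGroup V] [Module ℝ V]
    (ω : V →ₗ[ℝ] V →ₗ[ℝ] ℝ) (W : Submodule ℝ V) : Submodule ℝ V where
  carrier := {v | ∀ u ∈ W, ω v u = 0}
  add_mem' := by
    intro a b ha hb u hu
    rw [Set.mem_setOf_eq] at *
    rw [map_add, LinearMap.add_apply, ha u hu, hb u hu, add_zero]
  zero_mem' := by intro u _; simp
  smul_mem' := by
    intro c a ha u hu
    rw [Set.mem_setOf_eq] at *
    rw [map_smul, LinearMap.smul_apply, ha u hu, smul_zero]

/-- The symplectic form `ω̄((v,v'),(u,u')) = ω(v,u) − ω(v',u')` on `V × V`. -/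
def prodForm {X Y : Type*} [AddCommGroup X] [Module ℝ X] [AddCommGroup Y] [Module ℝ Y]
    (ωX : X →ₗ[ℝ] X →ₗ[ℝ] ℝ) (ωY : Y →ₗ[ℝ] Y →ₗ[ℝ] ℝ) :
    (X × Y) →ₗ[ℝ] (X × Y) →ₗ[ℝ] ℝ :=
  LinearMap.mk₂ ℝ (fun p q => ωX p.1 q.1 - ωY p.2 q.2)
    (by intro m₁ m₂ n; simp [map_add, LinearMap.add_apply]; ring)
    (by intro c m n; simp [map_smul, LinearMap.smul_apply, smul_eq_mul]; ring)
    (by intro m n₁ n₂; simp [map_add, LinearMap.add_apply]; ring)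
    (by intro c m n; simp [map_smul, LinearMap.smul_apply, smul_eq_mul]; ring)

/-
The subspaces `A^ω × 0` and `0 × B^ω` are ω̄-orthogonal to `L`, and `L` contains its
ω̄-orthogonal, so both lie in `L`. Subtracting `(v₀, 0)` and `(0, w₀)` from `(v, w) ∈ L` leaves
`(v₁, w₁) ∈ L`.
-/

section ProdForm

variable {X Y : Type*} [AddCommGroup X] [Module ℝ X] [AddCommGroup Y] [Module ℝ Y]
  {ωX : X →ₗ[ℝ] X →ₗ[ℝ] ℝ} {ωY : Y →ₗ[ℝ] Y →ₗ[ℝ] ℝ} {L : Submodule ℝ (X × Y)}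

theorem prodForm_apply (p q : X × Y) : prodForm ωX ωY p q = ωX p.1 q.1 - ωY p.2 q.2 := rfl

theorem mk_zero_mem_oOrtho_prodForm {x : X}
    (hx : x ∈ oOrtho ωX (L.map (LinearMap.fst ℝ X Y))) :
    (x, 0) ∈ oOrtho (prodForm ωX ωY) L := fun q hq => by
  rw [prodForm_apply, hx q.1 ⟨q, hq, rfl⟩, map_zero, LinearMap.zero_apply, sub_zero]

theorem zero_mk_mem_oOrtho_prodForm {y : Y}
    (hy : y ∈ oOrtho ωY (L.map (LinearMap.snd ℝ X Y))) :
    (0, y) ∈ oOrtho (prodForm ωX ωY) L := fun q hq => by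
  rw [prodForm_apply, hy q.2 ⟨q, hq, rfl⟩, map_zero, LinearMap.zero_apply, sub_zero]

end ProdForm

theorem stmt13_general
    {V : Type*} [AddCommGroup V] [Module ℝ V]
    (ω : V →ₗ[ℝ] V →ₗ[ℝ] ℝ)
    (L : Submodule ℝ (V × V)) (hL : L = oOrtho (prodForm ω ω) L)
    (A₁ B₁ : Submodule ℝ V) :
    ∀ v w v₀ v₁ w₀ w₁ : V, (v, w) ∈ L →
      v₀ ∈ oOrtho ω (Submodule.map (LinearMap.fst ℝ V V) L) → v₁ ∈ A₁ → v = v₀ + v₁ →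
      w₀ ∈ oOrtho ω (Submodule.map (LinearMap.snd ℝ V V) L) → w₁ ∈ B₁ → w = w₀ + w₁ →
      (v₁, w₁) ∈ L := by
  rintro v w v₀ v₁ w₀ w₁ hvw hv₀ - rfl hw₀ - rfl
  have hv₀L : (v₀, 0) ∈ L := hL.ge <| mk_zero_mem_oOrtho_prodForm hv₀
  have hw₀L : (0, w₀) ∈ L := hL.ge <| zero_mk_mem_oOrtho_prodForm hw₀
  have hsplit : (v₁, w₁) = (v₀ + v₁, w₀ + w₁) - (v₀, 0) - (0, w₀) := by
    ext <;> simp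
  rw [hsplit]
  exact sub_mem (sub_mem hvw hv₀L) hw₀L

/-- if `L ⊆ V × V` is a linear canonical relation with domain `A` and range
`B`, `A = A^ω ⊕ A₁`, `B = B^ω ⊕ B₁`, and `(v,w) ∈ L` with decompositions `v = v₀ + v₁`,
`w = w₀ + w₁`, then `(v₁,w₁) ∈ L`. -/
theorem stmt13
    {V : Type*} [AddCommGroup V] [Module ℝ V] [FiniteDimensional ℝ V]
    (ω : V →ₗ[ℝ] V →ₗ[ℝ] ℝ) (hωalt : ω.IsAlt) (hωnd : ω.Nondegenerate)
    (L : Submodule ℝ (V × V)) (hL : L = oOrtho (prodForm ω ω) L)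
    (A₁ B₁ : Submodule ℝ V)
    -- A = A^ω ⊕ A₁
    (hA₁ : oOrtho ω (Submodule.map (LinearMap.fst ℝ V V) L) ⊓ A₁ = ⊥)
    (hA₂ : oOrtho ω (Submodule.map (LinearMap.fst ℝ V V) L) ⊔ A₁ =
      Submodule.map (LinearMap.fst ℝ V V) L)
    -- B = B^ω ⊕ B₁
    (hB₁ : oOrtho ω (Submodule.map (LinearMap.snd ℝ V V) L) ⊓ B₁ = ⊥)
    (hB₂ : oOrtho ω (Submodule.map (LinearMap.snd ℝ V V) L) ⊔ B₁ =
      Submodule.map (LinearMap.snd ℝ V V) L) :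
    ∀ v w v₀ v₁ w₀ w₁ : V, (v, w) ∈ L →
      v₀ ∈ oOrtho ω (Submodule.map (LinearMap.fst ℝ V V) L) → v₁ ∈ A₁ → v = v₀ + v₁ →
      w₀ ∈ oOrtho ω (Submodule.map (LinearMap.snd ℝ V V) L) → w₁ ∈ B₁ → w = w₀ + w₁ →
      (v₁, w₁) ∈ L :=
  stmt13_general ω L hL A₁ B₁
end

section
/- Let (A,B) be a coisotropic pair in a symplectic vector space (V,ω) and (Â,B̂) a coisotropic pair in a symplectic vector space (V̂,ω̂). Then there exists a linear symplectomorphism S : V → V̂ with S(A) = Â and S(B) = B̂ if and only if the canonical invariants of (A,B) and (Â,B̂) are equal, i.e. dim(A^ω ∩ B^ω) = dim(Â^ω̂ ∩ B̂^ω̂), dim A^ω = dim Â^ω̂, dim B^ω = dim B̂^ω̂, dim V = dim V̂, and dim(A^ω ∩ B) = dim(Â^ω̂ ∩ B̂). -/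
/-!
Taking ω-orthogonals turns the coisotropic pair `(A, B)` into the isotropic pair
`(C, D) = (A^ω, B^ω)`, and a symplectomorphism maps `A` to `Â` iff it maps `C` to `Ĉ`, so it
suffices to classify isotropic pairs.

For an isotropic pair put `G = C ∩ D ⊆ K = C ∩ D^ω ⊆ C` and `G ⊆ L = D ∩ C^ω ⊆ D`. Choose
complements `K = G ⊕ M`, `C = K ⊕ P`, `L = G ⊕ N`. The form pairs `P` nondegenerately with `D`,
so a basis of `P` has a dual family in `D`, spanning a complement `Q` of `L` in `D`. Bases of
`G, M, P, N` and this dual family together form a basis of `C + D` whose Gram matrix depends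
only on the invariants: the only nonzero entries pair `P` with `Q`.

Two pairs with the same invariants thus give linearly independent families with equal Gram
matrices. The linear isometry between their spans extends to a symplectomorphism by Witt's
extension theorem: an isometric embedding `e` of a proper subspace `U` extends to `U + ℝv` as
soon as some `v ∉ U` has an image `w ∉ e(U)` with `ω̂(w, e u) = ω(v, u)` for all `u ∈ U`.
-/

open Submodule Module

section LinearAlgebra

variable {V : Type*} [AddCommGroup V] [Module ℝ V]

lemma span_range_coe_basis {X : Submodule ℝ V} {ι : Type*} (b : Basis ι ℝ X) :
    span ℝ (Set.range fun i => (b i : V)) = X := by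
  rw [Set.range_comp' Subtype.val b, ← coe_subtype, ← map_span, b.span_eq, Submodule.map_top,
    range_subtype]

lemma Submodule.finrank_sup_of_disjoint [FiniteDimensional ℝ V] {X Y : Submodule ℝ V}
    (h : Disjoint X Y) : finrank ℝ (X ⊔ Y : Submodule ℝ V) = finrank ℝ X + finrank ℝ Y := by
  have := finrank_sup_add_finrank_inf_eq X Y
  rwa [h.eq_bot, finrank_bot, add_zero] at this

variable {K E F : Type*} [Field K] [AddCommGroup E] [Module K E] [AddCommGroup F] [Module K F]

lemma LinearPMap.exists_supSpanSingleton_apply (f : E →ₗ.[K] F) {x : E} (y : F)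
    (hx : x ∉ f.domain) (z : (f.supSpanSingleton x y hx).domain) :
    ∃ (x' : f.domain) (c : K), (z : E) = x' + c • x ∧
      f.supSpanSingleton x y hx z = f x' + c • y := by
  obtain ⟨z, hz⟩ := z
  obtain ⟨x', hx', _, hc, rfl⟩ := mem_sup.1 hz
  obtain ⟨c, rfl⟩ := mem_span_singleton.1 hc
  exact ⟨⟨x', hx'⟩, c, rfl, by simpa using f.supSpanSingleton_apply_mk x y hx x' hx' c⟩

lemma LinearPMap.injective_supSpanSingleton {f : E →ₗ.[K] F} (hf : Function.Injective f)
    {x : E} {y : F} (hx : x ∉ f.domain) (hy : y ∉ LinearMap.range f.toFun) :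
    Function.Injective (f.supSpanSingleton x y hx) := by
  refine (injective_iff_map_eq_zero _).2 fun z hz => ?_
  obtain ⟨x', c, hzx, hzf⟩ := f.exists_supSpanSingleton_apply y hx z
  rw [LinearPMap.toFun_eq_coe] at hz
  rw [hz, eq_comm, add_eq_zero_iff_eq_neg] at hzf
  rcases eq_or_ne c 0 with rfl | hc
  · obtain rfl : x' = 0 := hf (by simpa using hzf)
    exact Subtype.ext (by simpa using hzx)
  · refine absurd ⟨-c⁻¹ • x', ?_⟩ hy
    rw [LinearPMap.toFun_eq_coe, neg_smul, LinearPMap.map_neg, LinearPMap.map_smul, hzf,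
      smul_neg, neg_neg, smul_smul, inv_mul_cancel₀ hc, one_smul]

end LinearAlgebra

section Orthogonal

variable {V W : Type*} [AddCommGroup V] [Module ℝ V] [AddCommGroup W] [Module ℝ W]
  {ω : V →ₗ[ℝ] V →ₗ[ℝ] ℝ} {ω' : W →ₗ[ℝ] W →ₗ[ℝ] ℝ}

lemma oOrtho_eq_orthogonal (hω : ω.IsAlt) (N : Submodule ℝ V) :
    oOrtho ω N = LinearMap.BilinForm.orthogonal ω N := by
  ext v
  exact ⟨fun hv u hu => hω.isRefl _ _ (hv u hu), fun hv u hu => hω.isRefl _ _ (hv u hu)⟩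

lemma le_oOrtho_comm (hω : ω.IsAlt) {X Y : Submodule ℝ V} : X ≤ oOrtho ω Y ↔ Y ≤ oOrtho ω X :=
  ⟨fun h _ hy _ hx => hω.isRefl _ _ (h hx _ hy), fun h _ hx _ hy => hω.isRefl _ _ (h hy _ hx)⟩

lemma oOrtho_sup (X Y : Submodule ℝ V) : oOrtho ω (X ⊔ Y) = oOrtho ω X ⊓ oOrtho ω Y := by
  ext v
  refine ⟨fun hv => ⟨fun x hx => hv x (mem_sup_left hx), fun y hy => hv y (mem_sup_right hy)⟩,
    fun ⟨hX, hY⟩ z hz => ?_⟩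
  obtain ⟨x, hx, y, hy, rfl⟩ := mem_sup.1 hz
  rw [map_add, hX x hx, hY y hy, add_zero]

lemma map_oOrtho (S : V ≃ₗ[ℝ] W) (hS : ∀ v u : V, ω' (S v) (S u) = ω v u)
    (N : Submodule ℝ V) :
    (oOrtho ω N).map (S : V →ₗ[ℝ] W) = oOrtho ω' (N.map (S : V →ₗ[ℝ] W)) := by
  ext w
  rw [mem_map_equiv]
  refine ⟨fun hw u hu => ?_, fun hw u hu => ?_⟩
  · obtain ⟨u, hu', rfl⟩ := mem_map.1 hu
    simpa [← hS] using hw u hu'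
  · simpa [← hS] using hw (S u) (mem_map_of_mem hu)

variable [FiniteDimensional ℝ V]

lemma finrank_oOrtho (hω : ω.IsAlt) (hωnd : ω.Nondegenerate) (N : Submodule ℝ V) :
    finrank ℝ (oOrtho ω N) = finrank ℝ V - finrank ℝ N := by
  rw [oOrtho_eq_orthogonal hω]
  exact LinearMap.BilinForm.finrank_orthogonal hωnd N

lemma oOrtho_oOrtho (hω : ω.IsAlt) (hωnd : ω.Nondegenerate) (N : Submodule ℝ V) :
    oOrtho ω (oOrtho ω N) = N := by
  rw [oOrtho_eq_orthogonal hω, oOrtho_eq_orthogonal hω]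
  exact LinearMap.BilinForm.orthogonal_orthogonal hωnd hω.isRefl N

lemma exists_forall_apply_eq (hωnd : ω.Nondegenerate) (U : Submodule ℝ V) (f : Dual ℝ U) :
    ∃ v : V, ∀ u : U, ω v u = f u := by
  obtain ⟨g, rfl⟩ := LinearMap.dualMap_surjective_of_injective U.injective_subtype f
  exact ⟨(LinearMap.BilinForm.toDual ω hωnd).symm g, fun u =>
    LinearMap.BilinForm.apply_toDual_symm_apply (hB := hωnd) g u⟩

end Orthogonal

section Witt

variable {V W : Type*} [AddCommGroup V] [Module ℝ V] [AddCommGroup W] [Module ℝ W]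
  {ω : V →ₗ[ℝ] V →ₗ[ℝ] ℝ} {ω' : W →ₗ[ℝ] W →ₗ[ℝ] ℝ}

lemma exists_isometric_image_of_coisotropic [FiniteDimensional ℝ W] (hω'nd : ω'.Nondegenerate)
    {U : Submodule ℝ V} (hU : oOrtho ω U ≤ U) {R : Submodule ℝ W} (e : U ≃ₗ[ℝ] R)
    (he : ∀ x y : U, ω' (e x) (e y) = ω x y) {v : V} (hv : v ∉ U) :
    ∃ w ∉ R, ∀ u : U, ω' w (e u) = ω v u := by
  obtain ⟨w, hw⟩ := exists_forall_apply_eq hω'nd R (ω v ∘ₗ U.subtype ∘ₗ e.symm.toLinearMap)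
  refine ⟨w, fun hwR => hv ?_, fun u => by simpa using hw (e u)⟩
  -- if `w = e u₀`, then `v - u₀ ∈ U^ω ⊆ U`
  set u₀ := e.symm ⟨w, hwR⟩
  have hu₀ : v - u₀ ∈ oOrtho ω U := by
    intro u hu
    have h₁ := hw (e ⟨u, hu⟩)
    have h₂ := he u₀ ⟨u, hu⟩
    simp only [u₀, LinearEquiv.apply_symm_apply, LinearMap.coe_comp, LinearEquiv.coe_coe,
      Function.comp_apply, LinearEquiv.symm_apply_apply, coe_subtype] at h₁ h₂
    rw [map_sub, LinearMap.sub_apply, ← h₁, ← h₂, sub_self]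
  simpa using U.add_mem (hU hu₀) u₀.2

/-- If `U` is coisotropic any `v ∉ U` has an image; if `e U` is coisotropic, argue the same way
for `e.symm`; otherwise take `v ∈ U^ω \ U` and `w ∈ (e U)^ω \ e U`. -/
lemma exists_isometric_extension_pair [FiniteDimensional ℝ V] [FiniteDimensional ℝ W]
    (hωnd : ω.Nondegenerate) (hω'nd : ω'.Nondegenerate) (hdim : finrank ℝ V = finrank ℝ W)
    {U : Submodule ℝ V} {R : Submodule ℝ W} (e : U ≃ₗ[ℝ] R)
    (he : ∀ x y : U, ω' (e x) (e y) = ω x y) (hU : U ≠ ⊤) :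
    ∃ v ∉ U, ∃ w ∉ R, ∀ u : U, ω' w (e u) = ω v u := by
  by_cases hUc : oOrtho ω U ≤ U
  · obtain ⟨v, -, hv⟩ := SetLike.exists_of_lt (lt_top_iff_ne_top.2 hU)
    exact ⟨v, hv, exists_isometric_image_of_coisotropic hω'nd hUc e he hv⟩
  by_cases hRc : oOrtho ω' R ≤ R
  · have hR : R ≠ ⊤ := by
      rintro rfl
      have := Submodule.finrank_lt hU
      rw [e.finrank_eq, finrank_top] at this
      omega
    obtain ⟨w, -, hw⟩ := SetLike.exists_of_lt (lt_top_iff_ne_top.2 hR)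
    obtain ⟨v, hv, hvw⟩ := exists_isometric_image_of_coisotropic hωnd hRc e.symm
      (fun x y => by simpa using (he (e.symm x) (e.symm y)).symm) hw
    exact ⟨v, hv, w, hw, fun u => by simpa using (hvw (e u)).symm⟩
  · obtain ⟨v, hvU, hv⟩ := SetLike.not_le_iff_exists.1 hUc
    obtain ⟨w, hwR, hw⟩ := SetLike.not_le_iff_exists.1 hRc
    exact ⟨v, hv, w, hw, fun u => by rw [hwR _ (e u).2, hvU _ u.2]⟩

lemma LinearPMap.supSpanSingleton_apply_apply (hω : ω.IsAlt) (hω' : ω'.IsAlt)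
    {f : V →ₗ.[ℝ] W} (hfω : ∀ a b : f.domain, ω' (f a) (f b) = ω a b) {v : V} {w : W}
    (hv : v ∉ f.domain) (hvw : ∀ u : f.domain, ω' w (f u) = ω v u)
    (a b : (f.supSpanSingleton v w hv).domain) :
    ω' (f.supSpanSingleton v w hv a) (f.supSpanSingleton v w hv b) = ω a b := by
  obtain ⟨a', c, ha, hga⟩ := f.exists_supSpanSingleton_apply w hv a
  obtain ⟨b', d, hb, hgb⟩ := f.exists_supSpanSingleton_apply w hv b
  have hwv : ω' (f a') w = ω a' v := by rw [← hω'.neg, hvw, hω.neg]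
  rw [hga, hgb, ha, hb]
  simp only [_root_.map_add, _root_.map_smul, LinearMap.add_apply, LinearMap.smul_apply,
    smul_eq_mul, hfω, hvw, hwv, hω.self_eq_zero, hω'.self_eq_zero]

theorem exists_symplectomorphism_extending [FiniteDimensional ℝ V] [FiniteDimensional ℝ W]
    (hω : ω.IsAlt) (hωnd : ω.Nondegenerate) (hω' : ω'.IsAlt) (hω'nd : ω'.Nondegenerate)
    (hdim : finrank ℝ V = finrank ℝ W) (f : V →ₗ.[ℝ] W) (hf : Function.Injective f)
    (hfω : ∀ a b : f.domain, ω' (f a) (f b) = ω a b) :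
    ∃ S : V ≃ₗ[ℝ] W, (∀ v u : V, ω' (S v) (S u) = ω v u) ∧ ∀ x : f.domain, S x = f x := by
  obtain ⟨U, hU⟩ : ∃ U, f.domain = U := ⟨_, rfl⟩
  induction U using WellFoundedGT.induction generalizing f with
  | _ U ih =>
    by_cases htop : U = ⊤
    · let S := LinearMap.linearEquivOfInjective
        (f.toFun ∘ₗ (LinearEquiv.ofTop _ (hU.trans htop)).symm.toLinearMap)
        (hf.comp (LinearEquiv.injective _)) hdim
      exact ⟨S, fun v u => hfω _ _, fun x => rfl⟩
    obtain ⟨v, hv, w, hw, hvw⟩ := exists_isometric_extension_pair hωnd hω'nd hdim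
      (LinearEquiv.ofInjective f.toFun hf) (fun a b => hfω a b) (hU ▸ htop)
    replace hvw : ∀ u : f.domain, ω' w (f u) = ω v u := fun u => hvw u
    obtain ⟨S, hS, hSg⟩ := ih _ (hU ▸ lt_sup_iff_notMem.2 hv) (f.supSpanSingleton v w hv)
      (LinearPMap.injective_supSpanSingleton hf hv hw)
      (LinearPMap.supSpanSingleton_apply_apply hω hω' hfω hv hvw) rfl
    exact ⟨S, hS, fun x => (hSg ⟨x, mem_sup_left x.2⟩).trans
      (f.supSpanSingleton_apply_mk_of_mem w hv x.2)⟩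

theorem exists_symplectomorphism_of_gram_eq [FiniteDimensional ℝ V] [FiniteDimensional ℝ W]
    (hω : ω.IsAlt) (hωnd : ω.Nondegenerate) (hω' : ω'.IsAlt) (hω'nd : ω'.Nondegenerate)
    (hdim : finrank ℝ V = finrank ℝ W) {ι : Type*} {e : ι → V} {e' : ι → W}
    (he : LinearIndependent ℝ e) (he' : LinearIndependent ℝ e')
    (hgram : ∀ i j, ω' (e' i) (e' j) = ω (e i) (e j)) :
    ∃ S : V ≃ₗ[ℝ] W, (∀ v u : V, ω' (S v) (S u) = ω v u) ∧ ⇑S ∘ e = e' := by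
  let b := Basis.span he
  have hbe : ∀ i, (b i : V) = e i := fun i => by simp only [b, Basis.span_apply]
  let φ : span ℝ (Set.range e) →ₗ[ℝ] W :=
    (span ℝ (Set.range e')).subtype ∘ₗ (b.equiv (Basis.span he') (Equiv.refl ι)).toLinearMap
  have hφb : ∀ i, φ (b i) = e' i := fun i => by
    simp only [φ, LinearMap.coe_comp, Function.comp_apply, LinearEquiv.coe_coe, Basis.equiv_apply,
      Equiv.refl_apply, Basis.span_apply, coe_subtype]
  have hφω : ω'.compl₁₂ φ φ =
      ω.compl₁₂ (span ℝ (Set.range e)).subtype (span ℝ (Set.range e)).subtype :=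
    LinearMap.ext_basis b b fun i j => by
      simp only [LinearMap.compl₁₂_apply, hφb, hgram, coe_subtype, hbe]
  obtain ⟨S, hS, hSφ⟩ := exists_symplectomorphism_extending hω hωnd hω' hω'nd hdim ⟨_, φ⟩
    ((span ℝ (Set.range e')).injective_subtype.comp (LinearEquiv.injective _))
    fun x y => congr($hφω x y)
  refine ⟨S, hS, funext fun i => ?_⟩
  have hSb := hSφ (b i)
  rw [hbe] at hSb
  exact hSb.trans (hφb i)

end Witt

section NormalForm

variable {V : Type*} [AddCommGroup V] [Module ℝ V] {ω : V →ₗ[ℝ] V →ₗ[ℝ] ℝ}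

lemma exists_dual_family [FiniteDimensional ℝ V] {P D : Submodule ℝ V}
    (hPD : Disjoint P (oOrtho ω D)) {ι : Type*} [DecidableEq ι] (b : Basis ι ℝ P) :
    ∃ q : ι → V, (∀ i, q i ∈ D) ∧ ∀ i j, ω (b i) (q j) = if i = j then 1 else 0 := by
  have hinj : Function.Injective (ω.compl₁₂ P.subtype D.subtype) := by
    refine (injective_iff_map_eq_zero _).2 fun p hp => ?_
    have hpD : (p : V) ∈ oOrtho ω D := fun d hd => congr($hp ⟨d, hd⟩)
    simpa using hPD.le_bot ⟨p.2, hpD⟩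
  choose q hq using fun j => LinearMap.flip_surjective_iff₁.2 hinj (b.coord j)
  refine ⟨fun j => q j, fun j => (q j).2, fun i j => ?_⟩
  simpa [Finsupp.single_apply, eq_comm] using congr($(hq j) (b i))

lemma dual_family_spans_complement [FiniteDimensional ℝ V] (hω : ω.IsAlt) (hωnd : ω.Nondegenerate)
    {C D K P : Submodule ℝ V} (hKD : K ≤ oOrtho ω D) (hKP : K ⊔ P = C) {r : ℕ}
    (p : Basis (Fin r) ℝ P) {q : Fin r → V} (hqD : ∀ i, q i ∈ D)
    (hpq : ∀ i j, ω (p i) (q j) = if i = j then 1 else 0) :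
    LinearIndependent ℝ q ∧ Disjoint (D ⊓ oOrtho ω C) (span ℝ (Set.range q)) ∧
      D ⊓ oOrtho ω C ⊔ span ℝ (Set.range q) = D := by
  have hcoeff : ∀ (c : Fin r → ℝ) i, ω (p i) (∑ j, c j • q j) = c i := fun c i => by
    simp [map_sum, hpq]
  have hq : LinearIndependent ℝ q :=
    Fintype.linearIndependent_iff.2 fun c hc i => by simpa [hc] using (hcoeff c i).symm
  have hLQ : Disjoint (D ⊓ oOrtho ω C) (span ℝ (Set.range q)) := by
    refine disjoint_def.2 fun x hxL hxQ => ?_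
    obtain ⟨c, rfl⟩ := (mem_span_range_iff_exists_fun ℝ).1 hxQ
    have hc : c = 0 := funext fun i => by
      rw [← hcoeff c i]
      exact hω.isRefl _ _ (hxL.2 _ (hKP ▸ mem_sup_right (p i).2))
    simp [hc]
  refine ⟨hq, hLQ, eq_of_le_of_finrank_le (sup_le inf_le_left (span_le.2 ?_)) ?_⟩
  · rintro _ ⟨i, rfl⟩
    exact hqD i
  -- `D ∩ P^ω ⊆ D ∩ C^ω` has codimension at most `dim P = r` in `D`
  have hle : D ⊓ oOrtho ω P ≤ D ⊓ oOrtho ω C := fun x hx =>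
    ⟨hx.1, by rw [← hKP, oOrtho_sup]; exact ⟨(le_oOrtho_comm hω).1 hKD hx.1, hx.2⟩⟩
  have := finrank_sup_add_finrank_inf_eq D (oOrtho ω P)
  have := finrank_le (D ⊔ oOrtho ω P)
  have := finrank_oOrtho hω hωnd P
  have := finrank_le P
  have := finrank_mono hle
  rw [finrank_sup_of_disjoint hLQ, finrank_span_eq_card hq, ← finrank_eq_card_basis p]
  omega

/-- The blocks index bases of `C ∩ D`, `M`, `P` (together spanning `C`) and of `N`, `Q`
(spanning `D` together with the first block); only `P` and its dual family `Q` pair. -/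
def isotropicPairGram {k a b r : ℕ} :
    (Fin k ⊕ Fin a ⊕ Fin r) ⊕ (Fin b ⊕ Fin r) → (Fin k ⊕ Fin a ⊕ Fin r) ⊕ (Fin b ⊕ Fin r) → ℝ
  | .inl (.inr (.inr i)), .inr (.inr j) => if i = j then 1 else 0
  | .inr (.inr i), .inl (.inr (.inr j)) => if i = j then -1 else 0
  | _, _ => 0

lemma apply_sumElim_eq_isotropicPairGram (hω : ω.IsAlt) {C D : Submodule ℝ V}
    (hC : C ≤ oOrtho ω C) (hD : D ≤ oOrtho ω D) {k a b r : ℕ} {g : Fin k → V} {m : Fin a → V}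
    {p : Fin r → V} {n : Fin b → V} {q : Fin r → V} (hg : ∀ i, g i ∈ C ⊓ oOrtho ω D)
    (hm : ∀ i, m i ∈ C ⊓ oOrtho ω D) (hp : ∀ i, p i ∈ C) (hn : ∀ i, n i ∈ D ⊓ oOrtho ω C)
    (hq : ∀ i, q i ∈ D) (hpq : ∀ i j, ω (p i) (q j) = if i = j then 1 else 0)
    (x y : (Fin k ⊕ Fin a ⊕ Fin r) ⊕ (Fin b ⊕ Fin r)) :
    ω (Sum.elim (Sum.elim g (Sum.elim m p)) (Sum.elim n q) x)
      (Sum.elim (Sum.elim g (Sum.elim m p)) (Sum.elim n q) y) = isotropicPairGram x y := by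
  have hCmem : ∀ x, Sum.elim g (Sum.elim m p) x ∈ C := by
    rintro (i | i | i)
    exacts [(hg i).1, (hm i).1, hp i]
  have hDmem : ∀ y, Sum.elim n q y ∈ D := by
    rintro (j | j)
    exacts [(hn j).1, hq j]
  have hcross : ∀ x y, ω (Sum.elim g (Sum.elim m p) x) (Sum.elim n q y) =
      isotropicPairGram (.inl x) (.inr y) := by
    rintro (i | i | i) (j | j)
    · exact (hg i).2 _ (hDmem _)
    · exact (hg i).2 _ (hDmem _)
    · exact (hm i).2 _ (hDmem _)
    · exact (hm i).2 _ (hDmem _)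
    · exact hω.isRefl _ _ ((hn j).2 _ (hp i))
    · exact hpq i j
  rcases x with x | x <;> rcases y with y | y
  · rw [Sum.elim_inl, Sum.elim_inl, hC (hCmem x) _ (hCmem y)]
    rcases x with _ | _ | _ <;> rcases y with _ | _ | _ <;> rfl
  · exact hcross x y
  · rw [Sum.elim_inr, Sum.elim_inl, ← hω.neg, hcross]
    rcases x with _ | _ <;> rcases y with _ | _ | _ <;> simp [isotropicPairGram, eq_comm, neg_ite]
  · rw [Sum.elim_inr, Sum.elim_inr, hD (hDmem x) _ (hDmem y)]
    rcases x with _ | _ <;> rcases y with _ | _ <;> rfl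

theorem exists_isotropicPair_normalForm [FiniteDimensional ℝ V] (hω : ω.IsAlt)
    (hωnd : ω.Nondegenerate) {C D : Submodule ℝ V} (hC : C ≤ oOrtho ω C) (hD : D ≤ oOrtho ω D) :
    ∃ (k a b r : ℕ) (e : (Fin k ⊕ Fin a ⊕ Fin r) ⊕ (Fin b ⊕ Fin r) → V),
      finrank ℝ (C ⊓ D : Submodule ℝ V) = k ∧
      finrank ℝ (C ⊓ oOrtho ω D : Submodule ℝ V) = k + a ∧
      finrank ℝ C = k + a + r ∧ finrank ℝ D = k + b + r ∧
      LinearIndependent ℝ e ∧ span ℝ (e '' Set.range Sum.inl) = C ∧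
      span ℝ (e '' (Set.range (Sum.inl ∘ Sum.inl) ∪ Set.range Sum.inr)) = D ∧
      ∀ x y, ω (e x) (e y) = isotropicPairGram x y := by
  have hGK : C ⊓ D ≤ C ⊓ oOrtho ω D := inf_le_inf_left C hD
  have hGL : C ⊓ D ≤ D ⊓ oOrtho ω C := le_inf inf_le_right (inf_le_left.trans hC)
  obtain ⟨M, hGM, hGMK⟩ := IsModularLattice.exists_disjoint_and_sup_eq hGK
  obtain ⟨P, hKP, hKPC⟩ :=
    IsModularLattice.exists_disjoint_and_sup_eq (inf_le_left : C ⊓ oOrtho ω D ≤ C)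
  obtain ⟨N, hGN, hGNL⟩ := IsModularLattice.exists_disjoint_and_sup_eq hGL
  let p := finBasis ℝ P
  obtain ⟨q, hqD, hpq⟩ := exists_dual_family (D := D)
    (disjoint_iff_inf_le.2 fun x hx => hKP.le_bot ⟨⟨hKPC ▸ mem_sup_right hx.1, hx.2⟩, hx.1⟩) p
  obtain ⟨hq, hLQ, hLQD⟩ := dual_family_spans_complement hω hωnd inf_le_right hKPC p hqD hpq
  let g := finBasis ℝ (C ⊓ D : Submodule ℝ V)
  let m := finBasis ℝ M
  let n := finBasis ℝ N
  let e : (Fin _ ⊕ Fin _ ⊕ Fin _) ⊕ (Fin _ ⊕ Fin _) → V :=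
    Sum.elim (Sum.elim (fun i => g i) (Sum.elim (fun i => m i) (fun i => p i)))
      (Sum.elim (fun i => n i) q)
  have hspanC : span ℝ (e '' Set.range Sum.inl) = C := by
    rw [← Set.range_comp]
    simp only [e, Sum.elim_comp_inl, Set.Sum.elim_range, span_union, span_range_coe_basis]
    rw [← sup_assoc, hGMK, hKPC]
  have hspanD : span ℝ (e '' (Set.range (Sum.inl ∘ Sum.inl) ∪ Set.range Sum.inr)) = D := by
    rw [Set.image_union, ← Set.range_comp, ← Set.range_comp]
    simp only [e, ← Function.comp_assoc, Sum.elim_comp_inl, Sum.elim_comp_inr,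
      Set.Sum.elim_range, span_union, span_range_coe_basis]
    rw [← sup_assoc, hGNL, hLQD]
  have hspan : span ℝ (Set.range e) = C ⊔ D := by
    refine le_antisymm (span_le.2 ?_) (sup_le ?_ ?_)
    · rintro _ ⟨x | x, rfl⟩
      exacts [mem_sup_left (hspanC.le (subset_span ⟨_, ⟨x, rfl⟩, rfl⟩)),
        mem_sup_right (hspanD.le (subset_span ⟨_, Or.inr ⟨x, rfl⟩, rfl⟩))]
    · exact hspanC.symm.le.trans (span_mono (Set.image_subset_range _ _))
    · exact hspanD.symm.le.trans (span_mono (Set.image_subset_range _ _))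
  have hK := hGMK ▸ finrank_sup_of_disjoint hGM
  have hC' := hKPC ▸ finrank_sup_of_disjoint hKP
  have hL := hGNL ▸ finrank_sup_of_disjoint hGN
  have hD' := hLQD ▸ finrank_sup_of_disjoint hLQ
  have hCD := finrank_sup_add_finrank_inf_eq C D
  rw [finrank_span_eq_card hq, Fintype.card_fin] at hD'
  refine ⟨finrank ℝ (C ⊓ D : Submodule ℝ V), finrank ℝ M, finrank ℝ N, finrank ℝ P, e, rfl, hK,
    by omega, by omega, linearIndependent_iff_card_eq_finrank_span.2 ?_, hspanC, hspanD,
    apply_sumElim_eq_isotropicPairGram hω hC hD (fun i => hGK (g i).2)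
      (fun i => le_sup_right.trans_eq hGMK (m i).2) (fun i => le_sup_right.trans_eq hKPC (p i).2)
      (fun i => le_sup_right.trans_eq hGNL (n i).2) hqD hpq⟩
  rw [Set.finrank, hspan]
  simp only [Fintype.card_sum, Fintype.card_fin]
  omega

end NormalForm

theorem exists_symplectomorphism_of_isotropic {V W : Type*} [AddCommGroup V] [Module ℝ V]
    [FiniteDimensional ℝ V] [AddCommGroup W] [Module ℝ W] [FiniteDimensional ℝ W]
    {ω : V →ₗ[ℝ] V →ₗ[ℝ] ℝ} {ω' : W →ₗ[ℝ] W →ₗ[ℝ] ℝ}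
    (hω : ω.IsAlt) (hωnd : ω.Nondegenerate) (hω' : ω'.IsAlt) (hω'nd : ω'.Nondegenerate)
    {C D : Submodule ℝ V} (hC : C ≤ oOrtho ω C) (hD : D ≤ oOrtho ω D)
    {C' D' : Submodule ℝ W} (hC' : C' ≤ oOrtho ω' C') (hD' : D' ≤ oOrtho ω' D')
    (hdim : finrank ℝ V = finrank ℝ W)
    (hCD : finrank ℝ (C ⊓ D : Submodule ℝ V) = finrank ℝ (C' ⊓ D' : Submodule ℝ W))
    (hCD' : finrank ℝ (C ⊓ oOrtho ω D : Submodule ℝ V) =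
      finrank ℝ (C' ⊓ oOrtho ω' D' : Submodule ℝ W))
    (hCC' : finrank ℝ C = finrank ℝ C') (hDD' : finrank ℝ D = finrank ℝ D') :
    ∃ S : V ≃ₗ[ℝ] W, (∀ v u : V, ω' (S v) (S u) = ω v u) ∧
      C.map (S : V →ₗ[ℝ] W) = C' ∧ D.map (S : V →ₗ[ℝ] W) = D' := by
  obtain ⟨k, a, b, r, e, hk, ha, hr, hb, he, heC, heD, heω⟩ :=
    exists_isotropicPair_normalForm hω hωnd hC hD
  obtain ⟨k', a', b', r', e', hk', ha', hr', hb', he', he'C, he'D, he'ω⟩ :=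
    exists_isotropicPair_normalForm hω' hω'nd hC' hD'
  obtain rfl : k = k' := by omega
  obtain rfl : a = a' := by omega
  obtain rfl : r = r' := by omega
  obtain rfl : b = b' := by omega
  obtain ⟨S, hS, hSe⟩ := exists_symplectomorphism_of_gram_eq hω hωnd hω' hω'nd hdim he he'
    fun x y => (he'ω x y).trans (heω x y).symm
  refine ⟨S, hS, ?_, ?_⟩
  · rw [← heC, ← he'C, map_span, LinearEquiv.coe_coe, ← Set.image_comp, hSe]
  · rw [← heD, ← he'D, map_span, LinearEquiv.coe_coe, ← Set.image_comp, hSe]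

/-- two coisotropic pairs `(A,B)` in `(V,ω)` and `(Â,B̂)` in `(V̂,ω̂)` are
related by a linear symplectomorphism `S` with `S(A) = Â`, `S(B) = B̂` iff their
canonical invariants coincide. -/
theorem stmt16
    {V W : Type*} [AddCommGroup V] [Module ℝ V] [FiniteDimensional ℝ V]
    [AddCommGroup W] [Module ℝ W] [FiniteDimensional ℝ W]
    (ω : V →ₗ[ℝ] V →ₗ[ℝ] ℝ) (hωalt : ω.IsAlt) (hωnd : ω.Nondegenerate)
    (ω' : W →ₗ[ℝ] W →ₗ[ℝ] ℝ) (hω'alt : ω'.IsAlt) (hω'nd : ω'.Nondegenerate)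
    (A B : Submodule ℝ V) (hA : oOrtho ω A ≤ A) (hB : oOrtho ω B ≤ B)
    (A' B' : Submodule ℝ W) (hA' : oOrtho ω' A' ≤ A') (hB' : oOrtho ω' B' ≤ B') :
    (∃ S : V ≃ₗ[ℝ] W, (∀ v u : V, ω' (S v) (S u) = ω v u) ∧
        Submodule.map (S : V →ₗ[ℝ] W) A = A' ∧ Submodule.map (S : V →ₗ[ℝ] W) B = B') ↔
      (Module.finrank ℝ (oOrtho ω A ⊓ oOrtho ω B : Submodule ℝ V) =
          Module.finrank ℝ (oOrtho ω' A' ⊓ oOrtho ω' B' : Submodule ℝ W) ∧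
        Module.finrank ℝ (oOrtho ω A) = Module.finrank ℝ (oOrtho ω' A') ∧
        Module.finrank ℝ (oOrtho ω B) = Module.finrank ℝ (oOrtho ω' B') ∧
        Module.finrank ℝ V = Module.finrank ℝ W ∧
        Module.finrank ℝ (oOrtho ω A ⊓ B : Submodule ℝ V) =
          Module.finrank ℝ (oOrtho ω' A' ⊓ B' : Submodule ℝ W)) := by
  constructor
  · rintro ⟨S, hS, rfl, rfl⟩
    rw [← map_oOrtho S hS, ← map_oOrtho S hS, ← map_inf _ S.injective, ← map_inf _ S.injective]
    simp only [LinearEquiv.finrank_map_eq, S.finrank_eq, and_self]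
  rintro ⟨hAB, hA'A, hB'B, hdim, hAB'⟩
  have hAA := oOrtho_oOrtho hωalt hωnd A
  have hBB := oOrtho_oOrtho hωalt hωnd B
  have hAA' := oOrtho_oOrtho hω'alt hω'nd A'
  have hBB' := oOrtho_oOrtho hω'alt hω'nd B'
  obtain ⟨S, hS, hSA, hSB⟩ := exists_symplectomorphism_of_isotropic hωalt hωnd hω'alt hω'nd
    (hAA.symm ▸ hA) (hBB.symm ▸ hB) (hAA'.symm ▸ hA') (hBB'.symm ▸ hB') hdim hAB
    (by rwa [hBB, hBB']) hA'A hB'B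
  refine ⟨S, hS, ?_, ?_⟩
  · rw [← hAA, map_oOrtho S hS, hSA, hAA']
  · rw [← hBB, map_oOrtho S hS, hSB, hBB']
end
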